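/- The cyclic configuration-space integral of products of the sawtooth propagator computes zeta values: for k ≥ 2, ∫_{[0,1]^{k−1}} P(t₁)P(t₂)⋯P(t_{k−1})P(−t₁−t₂−⋯−t_{k−1}) dt₁⋯dt_{k−1} = ∑_{n≠0} 1/(2πin)^k = 2ζ(k)/(2πi)^k for even k, and 0 for odd k, where P(t) = t − 1/2 for 0 < t < 1 extended 1-periodically (and P = sawtooth with mean zero). -/

import Mathlib

/-!
Statement 14: The cyclic configuration-space integral of products of the
1-periodic sawtooth propagator P (with P(t) = t − 1/2 on (0,1)) computes zeta
values: for k ≥ 2,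
∫_{[0,1]^{k−1}} P(t₁)⋯P(t_{k−1}) P(−t₁−⋯−t_{k−1}) dt = ∑_{n≠0} 1/(2πin)^k,
which equals 2ζ(k)/(2πi)^k for even k and 0 for odd k.
-/

open MeasureTheory

noncomputable section

/-- The 1-periodic sawtooth propagator, `P(t) = t − 1/2` for `t ∈ (0,1)`,
extended 1-periodically (values on measure-zero sets are irrelevant). -/
def saw (t : ℝ) : ℝ := Int.fract t - 1 / 2

/-!
The proof is Fourier analysis on the circle `ℝ/ℤ`. The sawtooth has Fourier coefficients
`-1/(2πin)`, and the wheel integral is the value at `0` of the `k`-fold convolution power of the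
sawtooth, whose coefficients are therefore `(-1/(2πin))^k`. For `k ≥ 2` these coefficients are
absolutely summable, so the convolution power is the sum of its Fourier series: the twofold power
is the Bernoulli function `-B₂/2`, and every further convolution with the sawtooth may be computed
term by term. At `0` this gives `∑_{n ≠ 0} (2πin)^{-k}`, a sum which vanishes for odd `k` by
symmetry and equals `2ζ(k)/(2πi)^k` for even `k`.
-/

open Set Complex Real

section IterConv

variable {ν : Measure ℝ} {f : ℝ → ℝ}

/-- The `(n + 1)`-fold convolution power of `f` with respect to `ν`. -/
def iterConv (ν : Measure ℝ) (f : ℝ → ℝ) (n : ℕ) (x : ℝ) : ℝ :=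
  ∫ t, (∏ i, f (t i)) * f (x - ∑ i, t i) ∂Measure.pi fun _ : Fin n => ν

lemma iterConv_zero [IsProbabilityMeasure ν] (x : ℝ) : iterConv ν f 0 x = f x := by
  simp [iterConv]

lemma norm_prod_mul_sub_sum_le {C : ℝ} (hC : ∀ y, ‖f y‖ ≤ C) {n : ℕ} (x : ℝ) (t : Fin n → ℝ) :
    ‖(∏ i, f (t i)) * f (x - ∑ i, t i)‖ ≤ C ^ n * C := by
  have hprod : ∏ i, ‖f (t i)‖ ≤ C ^ n := by
    simpa using Finset.prod_le_prod (s := .univ) (fun i _ => norm_nonneg _) fun i _ => hC (t i)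
  rw [norm_mul, norm_prod]
  exact mul_le_mul hprod (hC _) (norm_nonneg _) (hprod.trans' (by positivity))

lemma iterConv_succ [IsProbabilityMeasure ν] (hf : Measurable f) {C : ℝ} (hC : ∀ y, ‖f y‖ ≤ C)
    (n : ℕ) (x : ℝ) :
    iterConv ν f (n + 1) x = ∫ u, f u * iterConv ν f n (x - u) ∂ν := by
  let e := (MeasurableEquiv.piFinSuccAbove (fun _ : Fin (n + 1) => ℝ) 0).symm
  have hint : Integrable (fun p => (∏ i, f (e p i)) * f (x - ∑ i, e p i))
      (ν.prod (Measure.pi fun _ : Fin n => ν)) :=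
    .of_bound (by fun_prop) _ (ae_of_all _ fun _ => norm_prod_mul_sub_sum_le hC x _)
  rw [iterConv, ← (measurePreserving_piFinSuccAbove (fun _ => ν) 0).symm.integral_comp',
    integral_prod _ hint]
  refine integral_congr_ae (ae_of_all _ fun u => ?_)
  simp only [iterConv, ← integral_const_mul]
  congr 1 with s
  simp [e, Fin.insertNthEquiv, Fin.prod_univ_succ, Fin.sum_univ_succ, sub_sub, mul_assoc]

lemma setIntegral_cube_eq_iterConv (f : ℝ → ℝ) (n : ℕ) :
    ∫ t in univ.pi fun _ : Fin n => Icc (0 : ℝ) 1, (∏ i, f (t i)) * f (-∑ i, t i) =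
      iterConv (volume.restrict (Icc 0 1)) f n 0 := by
  rw [iterConv, volume_pi, Measure.restrict_pi_pi]
  simp only [zero_sub]

end IterConv

instance : IsProbabilityMeasure (volume.restrict (Icc (0 : ℝ) 1)) := ⟨by simp⟩

lemma saw_add_intCast (t : ℝ) (m : ℤ) : saw (t + m) = saw t := by
  simp [saw]

lemma saw_of_mem_Ico {t : ℝ} (ht : t ∈ Ico 0 1) : saw t = t - 1 / 2 := by
  rw [saw, Int.fract_eq_self.2 ht]

lemma abs_saw_le (t : ℝ) : |saw t| ≤ 1 / 2 := by
  rw [abs_le, saw]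
  constructor <;> linarith [Int.fract_nonneg t, Int.fract_lt_one t]

lemma measurable_saw : Measurable saw := by
  unfold saw
  fun_prop

lemma integral_sub_half_mul_sub (a b c : ℝ) :
    ∫ u in a..b, (u - 1 / 2) * (c - u) =
      (-(b ^ 3 / 3) + (c + 1 / 2) * b ^ 2 / 2 - c * b / 2) -
        (-(a ^ 3 / 3) + (c + 1 / 2) * a ^ 2 / 2 - c * a / 2) := by
  refine intervalIntegral.integral_eq_sub_of_hasDerivAt
    (f := fun u => -(u ^ 3 / 3) + (c + 1 / 2) * u ^ 2 / 2 - c * u / 2) (fun u _ => ?_) ?_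
  · refine ((((hasDerivAt_pow 3 u).div_const 3).neg.add
      (((hasDerivAt_pow 2 u).const_mul (c + 1 / 2)).div_const 2)).sub
      (((hasDerivAt_id u).const_mul c).div_const 2)).congr_deriv ?_
    norm_num
    ring
  · exact Continuous.intervalIntegrable (by fun_prop) _ _

lemma integrableOn_saw_mul_saw_sub (y : ℝ) {s : Set ℝ} (hs : volume s ≠ ⊤) :
    IntegrableOn (fun u => saw u * saw (y - u)) s := by
  have : Fact (volume s < ⊤) := ⟨hs.lt_top⟩
  refine Integrable.of_bound (by unfold saw; fun_prop) (1 / 2 * (1 / 2)) (ae_of_all _ fun u => ?_)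
  rw [norm_mul]
  exact mul_le_mul (abs_saw_le u) (abs_saw_le _) (norm_nonneg _) (by norm_num)

lemma integral_saw_mul_saw_sub_of_mem_Ico {y : ℝ} (hy : y ∈ Ico 0 1) :
    ∫ u in Icc 0 1, saw u * saw (y - u) = -bernoulliFun 2 y / 2 := by
  obtain ⟨hy0, hy1⟩ := hy
  rw [integral_Icc_eq_integral_Ioo, ← Ioc_union_Ioo_eq_Ioo hy0 hy1,
    setIntegral_union (Ioc_disjoint_Ioi_same.mono_right Ioo_subset_Ioi_self) measurableSet_Ioo
      (integrableOn_saw_mul_saw_sub y measure_Ioc_lt_top.ne)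
      (integrableOn_saw_mul_saw_sub y measure_Ioo_lt_top.ne)]
  have hleft : ∫ u in Ioc 0 y, saw u * saw (y - u) =
      ∫ u in 0..y, (u - 1 / 2) * (y - 1 / 2 - u) := by
    rw [intervalIntegral.integral_of_le hy0]
    refine setIntegral_congr_fun measurableSet_Ioc fun u ⟨hu0, huy⟩ => ?_
    rw [saw_of_mem_Ico ⟨hu0.le, by linarith⟩, saw_of_mem_Ico ⟨by linarith, by linarith⟩]
    ring
  have hright : ∫ u in Ioo y 1, saw u * saw (y - u) =
      ∫ u in y..1, (u - 1 / 2) * (y + 1 / 2 - u) := by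
    rw [intervalIntegral.integral_of_le hy1.le, integral_Ioc_eq_integral_Ioo]
    refine setIntegral_congr_fun measurableSet_Ioo fun u ⟨hyu, hu1⟩ => ?_
    rw [saw_of_mem_Ico ⟨by linarith, hu1⟩, ← saw_add_intCast _ 1,
      saw_of_mem_Ico ⟨by push_cast; linarith, by push_cast; linarith⟩]
    push_cast
    ring
  rw [hleft, hright, integral_sub_half_mul_sub, integral_sub_half_mul_sub, bernoulliFun_two]
  ring

lemma integral_saw_mul_saw_sub (x : ℝ) :
    ∫ u in Icc 0 1, saw u * saw (x - u) = -bernoulliFun 2 (Int.fract x) / 2 := by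
  have hperiodic (u : ℝ) : saw (x - u) = saw (Int.fract x - u) := by
    rw [← saw_add_intCast (Int.fract x - u) ⌊x⌋, sub_add_eq_add_sub, Int.fract_add_floor]
  simp only [hperiodic]
  exact integral_saw_mul_saw_sub_of_mem_Ico ⟨Int.fract_nonneg x, Int.fract_lt_one x⟩

/-- The Fourier coefficients of `saw`; at `n = 0` division by zero gives the right value `0`. -/
def sawCoeff (n : ℤ) : ℂ := -1 / (2 * π * I * n)

lemma fourier_coe_sub (n : ℤ) (x u : ℝ) :
    fourier n ((x - u : ℝ) : UnitAddCircle) =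
      fourier (-n) (u : UnitAddCircle) * fourier n (x : UnitAddCircle) := by
  simp only [fourier_coe_apply, ← Complex.exp_add]
  congr 1
  push_cast
  ring

lemma integral_fourier_mul_saw (n : ℤ) :
    ∫ u in Icc (0 : ℝ) 1, fourier (-n) (u : UnitAddCircle) * (saw u : ℂ) = sawCoeff n := by
  have h := bernoulliFourierCoeff_eq one_ne_zero n
  rw [bernoulliFourierCoeff, fourierCoeffOn_eq_integral,
    intervalIntegral.integral_of_le zero_le_one, integral_Ioc_eq_integral_Ioo] at h
  simp only [fourier_coe_apply, sub_zero, div_one, one_smul, smul_eq_mul, Nat.factorial_one,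
    Nat.cast_one, pow_one] at h
  rw [integral_Icc_eq_integral_Ioo, sawCoeff, ← h]
  refine setIntegral_congr_fun measurableSet_Ioo fun u hu => ?_
  rw [saw_of_mem_Ico (Ioo_subset_Ico_self hu), bernoulliFun_one, fourier_coe_apply]

lemma integral_saw_mul_fourier (n : ℤ) (x : ℝ) :
    ∫ u in Icc 0 1, (saw u : ℂ) * fourier n ((x - u : ℝ) : UnitAddCircle) =
      sawCoeff n * fourier n (x : UnitAddCircle) := by
  simp_rw [fourier_coe_sub, ← mul_assoc, mul_comm (saw _ : ℂ)]
  rw [integral_mul_const, integral_fourier_mul_saw]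

lemma sawCoeff_pow (n : ℤ) (K : ℕ) : sawCoeff n ^ K = (-1) ^ K / (2 * π * I * n) ^ K := by
  rw [sawCoeff, div_pow]

lemma summable_norm_sawCoeff_pow {K : ℕ} (hK : 2 ≤ K) : Summable fun n => ‖sawCoeff n ^ K‖ := by
  refine summable_norm_iff.2 <|
    ((summable_bernoulli_fourier hK).mul_left ((-1 : ℂ) ^ (K + 1) / K.factorial)).congr fun n => ?_
  have : (K.factorial : ℂ) ≠ 0 := Nat.cast_ne_zero.2 K.factorial_ne_zero
  rw [sawCoeff_pow]
  field_simp
  ring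

def sawSeries (K : ℕ) (x : ℝ) : ℂ :=
  ∑' n : ℤ, sawCoeff n ^ K * fourier n (x : UnitAddCircle)

lemma sawSeries_zero (K : ℕ) : sawSeries K 0 = ∑' n : ℤ, sawCoeff n ^ K := by
  simp [sawSeries]

lemma sawSeries_two (x : ℝ) : sawSeries 2 x = -bernoulliFun 2 (Int.fract x) / 2 := by
  have h := (hasSum_one_div_pow_mul_fourier_mul_bernoulliFun le_rfl
    ⟨Int.fract_nonneg x, (Int.fract_lt_one x).le⟩).mul_left ((2 * π * I) ^ 2)⁻¹
  rw [show ((Int.fract x : ℝ) : UnitAddCircle) = x by simp] at h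
  rw [sawSeries]
  convert h.tsum_eq using 1
  · congr 1 with n
    rw [sawCoeff_pow]
    ring
  · have := two_pi_I_ne_zero
    field_simp
    norm_num

lemma integral_saw_mul_sawSeries {K : ℕ} (hK : 2 ≤ K) (x : ℝ) :
    ∫ u in Icc 0 1, (saw u : ℂ) * sawSeries K (x - u) = sawSeries (K + 1) x := by
  set F := fun (n : ℤ) (u : ℝ) =>
    (saw u : ℂ) * (sawCoeff n ^ K * fourier n ((x - u : ℝ) : UnitAddCircle))
  have hnorm (n : ℤ) (u : ℝ) : ‖F n u‖ = ‖sawCoeff n ^ K‖ * |saw u| := by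
    simp [F, fourier_apply, Circle.norm_coe, mul_comm]
  have hint (n : ℤ) : Integrable (F n) (volume.restrict (Icc 0 1)) := by
    refine Integrable.of_bound (by unfold F saw; fun_prop) (‖sawCoeff n ^ K‖ * (1 / 2))
      (ae_of_all _ fun u => ?_)
    rw [hnorm]
    exact mul_le_mul_of_nonneg_left (abs_saw_le u) (norm_nonneg _)
  have hsum : Summable fun n => ∫ u in Icc 0 1, ‖F n u‖ := by
    simp only [hnorm, integral_const_mul]
    exact (summable_norm_sawCoeff_pow hK).mul_right _
  simp only [sawSeries, ← tsum_mul_left]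
  rw [← integral_tsum_of_summable_integral_norm hint hsum]
  congr 1 with n
  simp only [F, mul_left_comm (saw _ : ℂ), integral_const_mul, integral_saw_mul_fourier]
  ring

lemma iterConv_saw_eq_sawSeries {n : ℕ} (hn : 1 ≤ n) (x : ℝ) :
    (iterConv (volume.restrict (Icc 0 1)) saw n x : ℂ) = sawSeries (n + 1) x := by
  have hsaw : ∀ y, ‖saw y‖ ≤ 1 / 2 := abs_saw_le
  induction n, hn using Nat.le_induction generalizing x with
  | base =>
    rw [iterConv_succ measurable_saw hsaw, show 1 + 1 = 2 from rfl, sawSeries_two]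
    simp only [iterConv_zero, integral_saw_mul_saw_sub]
    push_cast
    ring
  | succ n hn ih =>
    rw [iterConv_succ measurable_saw hsaw, ← integral_complex_ofReal]
    push_cast
    simp only [ih]
    exact integral_saw_mul_sawSeries (by omega) x

lemma tsum_sawCoeff_pow {k : ℕ} (hk : k ≠ 0) :
    ∑' n : ℤ, sawCoeff n ^ k = ∑' n : ℤ, if n = 0 then 0 else 1 / (2 * π * I * n) ^ k := by
  rw [← (Equiv.neg ℤ).tsum_eq]
  congr 1 with n
  split_ifs with hn
  · simp [hn, sawCoeff, hk]
  · rw [sawCoeff_pow, Equiv.neg_apply, Int.cast_neg, mul_neg, neg_pow (_ * _),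
      div_mul_cancel_left₀ (pow_ne_zero _ (by norm_num)), one_div]

lemma Function.Odd.tsum_eq_zero {α E : Type*} [InvolutiveNeg α] [AddCommGroup E]
    [TopologicalSpace E] [IsTopologicalAddGroup E] [T2Space E] [IsAddTorsionFree E] {f : α → E}
    (hf : f.Odd) :
    ∑' a, f a = 0 := by
  refine self_eq_neg.1 ?_
  rw [← tsum_neg, ← (Equiv.neg α).tsum_eq]
  exact tsum_congr hf

lemma tsum_int_ite_one_div_two_pi_I_mul_pow {k : ℕ} (hk : 2 ≤ k) :
    ∑' n : ℤ, (if n = 0 then 0 else 1 / (2 * π * I * n) ^ k) =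
      if Even k then 2 * riemannZeta k / (2 * π * I) ^ k else 0 := by
  have hsplit (n : ℤ) : (if n = 0 then 0 else 1 / (2 * π * I * n) ^ k) =
      ((2 * π * I) ^ k)⁻¹ * ((n : ℂ) ^ k)⁻¹ := by
    split_ifs with hn
    · simp [hn, zero_pow (by omega : k ≠ 0)]
    · rw [mul_pow, one_div, mul_inv]
  simp only [hsplit, tsum_mul_left]
  split_ifs with heven
  · rw [← two_mul_riemannZeta_eq_tsum_int_inv_pow_of_even hk heven]
    ring
  · rw [Function.Odd.tsum_eq_zero fun n => ?_, mul_zero]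
    simp [(Nat.not_even_iff_odd.1 heven).neg_pow]

/-- The `k`-gon wheel integral of sawtooth propagators equals
`∑_{n≠0} (2πin)^{−k}`, i.e. `2ζ(k)/(2πi)^k` for even `k` and `0` for odd `k`. -/
theorem wheel_integral_zeta (k : ℕ) (hk : 2 ≤ k) :
    ((((∫ t in (Set.univ.pi fun _ : Fin (k - 1) => Set.Icc (0 : ℝ) 1),
          (∏ i, saw (t i)) * saw (- ∑ i, t i)) : ℝ) : ℂ)
        = ∑' n : ℤ, (if n = 0 then 0 else 1 / (2 * Real.pi * Complex.I * n) ^ k)) ∧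
    ((((∫ t in (Set.univ.pi fun _ : Fin (k - 1) => Set.Icc (0 : ℝ) 1),
          (∏ i, saw (t i)) * saw (- ∑ i, t i)) : ℝ) : ℂ)
        = if Even k then 2 * riemannZeta k / (2 * Real.pi * Complex.I) ^ k else 0) := by
  have hwheel : ((∫ t in univ.pi fun _ : Fin (k - 1) => Icc (0 : ℝ) 1,
      (∏ i, saw (t i)) * saw (-∑ i, t i) : ℝ) : ℂ) = ∑' n : ℤ, sawCoeff n ^ k := by
    rw [setIntegral_cube_eq_iterConv, iterConv_saw_eq_sawSeries (by omega),
      Nat.sub_add_cancel (by omega), sawSeries_zero]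
  have hsum := hwheel.trans (tsum_sawCoeff_pow (by omega))
  exact ⟨hsum, hsum.trans (tsum_int_ite_one_div_two_pi_I_mul_pow hk)⟩
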